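/- A geodesic G of S² × ℝ is horizontal if and only if there exists a geodesic G' of S² × ℝ with G' ≠ G such that the intersection G ∩ G' has exactly two elements. -/

import Mathlib

open scoped RealInnerProductSpace

/-- Euclidean 3-space. -/
abbrev E3 : Type := EuclideanSpace ℝ (Fin 3)

/-- The unit sphere `S² ⊆ ℝ³`. -/
abbrev S2 : Type := Metric.sphere (0 : E3) 1

/-- A geodesic of `S² × ℝ`: a set of the form
`{(cos(α t) • u + sin(α t) • v, β t + c) | t ∈ ℝ}` where `u, v ∈ S²` are orthogonal,
`c ∈ ℝ`, and `(α, β) ≠ (0, 0)`. -/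
def IsSphGeodesic (G : Set (S2 × ℝ)) : Prop :=
  ∃ (u v : S2) (α β c : ℝ), ⟪(u : E3), (v : E3)⟫ = 0 ∧ (α, β) ≠ ((0 : ℝ), (0 : ℝ)) ∧
    G = {q : S2 × ℝ | ∃ t : ℝ,
      (q.1 : E3) = Real.cos (α * t) • (u : E3) + Real.sin (α * t) • (v : E3) ∧
      q.2 = β * t + c}

/-- A geodesic of `S² × ℝ` is horizontal if it is contained in `S² × {r}` for some `r`. -/
def IsHorizontalSphGeodesic (G : Set (S2 × ℝ)) : Prop :=
  IsSphGeodesic G ∧ ∃ r : ℝ, G ⊆ {q : S2 × ℝ | q.2 = r}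

/-- A geodesic of `S² × ℝ` is vertical if it equals `{p} × ℝ` for some `p ∈ S²`. -/
def IsVerticalSphGeodesic (G : Set (S2 × ℝ)) : Prop :=
  IsSphGeodesic G ∧ ∃ p : S2, G = {q : S2 × ℝ | q.1 = p}

/-- A geodesic of `S² × ℝ` is slant if it is neither horizontal nor vertical. -/
def IsSlantSphGeodesic (G : Set (S2 × ℝ)) : Prop :=
  IsSphGeodesic G ∧ ¬ IsHorizontalSphGeodesic G ∧ ¬ IsVerticalSphGeodesic G

/-!
Given a horizontal geodesic at height `c` over the great circle through `u` and `v`, pick a unit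
`w ⟂ u, v`: the horizontal geodesic at height `c` over the great circle through `u` and `w` meets
it exactly in `(±u, c)`.

Conversely, if two geodesics meet at parameters `s₁, s₂` of the first and `t₁, t₂` of the second,
they also meet at `2s₁ - s₂` and `2t₁ - t₂`. For the circle components this is because on a great
circle `p` the point `p (2x - y) = 2 cos (x - y) • p x - p y` only depends on `p x`, `p y` and
`cos (x - y) = ⟪p x, p y⟫`; the heights are affine in the parameter. On a non-horizontal geodesic
the height is injective, so this third common point differs from the first two.
-/

open Real Module

section GreatCircle

variable {E : Type*} [NormedAddCommGroup E] [InnerProductSpace ℝ E]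

theorem inner_cos_smul_add_sin_smul {u v : E} (hu : ‖u‖ = 1) (hv : ‖v‖ = 1) (huv : ⟪u, v⟫ = 0)
    (θ φ : ℝ) : ⟪cos θ • u + sin θ • v, cos φ • u + sin φ • v⟫ = cos (θ - φ) := by
  have hvu : ⟪v, u⟫ = 0 := by rwa [real_inner_comm]
  simp only [inner_add_left, inner_add_right, real_inner_smul_left, real_inner_smul_right,
    real_inner_self_eq_norm_sq, hu, hv, huv, hvu, cos_sub]
  ring

theorem norm_cos_smul_add_sin_smul {u v : E} (hu : ‖u‖ = 1) (hv : ‖v‖ = 1) (huv : ⟪u, v⟫ = 0)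
    (θ : ℝ) : ‖cos θ • u + sin θ • v‖ = 1 := by
  have h := inner_cos_smul_add_sin_smul hu hv huv θ θ
  rw [sub_self, cos_zero, real_inner_self_eq_norm_sq] at h
  exact (pow_eq_one_iff_of_nonneg (norm_nonneg _) two_ne_zero).mp h

theorem cos_smul_add_sin_smul_two_mul_sub (u v : E) (x y : ℝ) :
    cos (2 * x - y) • u + sin (2 * x - y) • v =
      (2 * cos (x - y)) • (cos x • u + sin x • v) - (cos y • u + sin y • v) := by
  obtain ⟨d, rfl⟩ : ∃ d, y = x - d := ⟨x - y, by ring⟩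
  rw [show 2 * x - (x - d) = x + d by ring, show x - (x - d) = d by ring, cos_add, sin_add,
    cos_sub, sin_sub]
  module

theorem cos_smul_add_sin_smul_two_mul_sub_eq {u v u' v' : E}
    (hu : ‖u‖ = 1) (hv : ‖v‖ = 1) (huv : ⟪u, v⟫ = 0)
    (hu' : ‖u'‖ = 1) (hv' : ‖v'‖ = 1) (huv' : ⟪u', v'⟫ = 0) {x₁ x₂ y₁ y₂ : ℝ}
    (h₁ : cos x₁ • u + sin x₁ • v = cos y₁ • u' + sin y₁ • v')
    (h₂ : cos x₂ • u + sin x₂ • v = cos y₂ • u' + sin y₂ • v') :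
    cos (2 * x₁ - x₂) • u + sin (2 * x₁ - x₂) • v =
      cos (2 * y₁ - y₂) • u' + sin (2 * y₁ - y₂) • v' := by
  have hcos : cos (x₁ - x₂) = cos (y₁ - y₂) := by
    rw [← inner_cos_smul_add_sin_smul hu hv huv, h₁, h₂, inner_cos_smul_add_sin_smul hu' hv' huv']
  rw [cos_smul_add_sin_smul_two_mul_sub, cos_smul_add_sin_smul_two_mul_sub, h₁, h₂, hcos]

theorem cos_smul_add_sin_smul_eq_or_eq_neg {u v w : E} (hv : ‖v‖ = 1) (huv : ⟪u, v⟫ = 0)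
    (hwv : ⟪w, v⟫ = 0) {x y : ℝ} (h : cos x • u + sin x • v = cos y • u + sin y • w) :
    cos x • u + sin x • v = u ∨ cos x • u + sin x • v = -u := by
  have hsin : sin x = 0 := by
    have h' := congrArg (⟪·, v⟫) h
    simpa [inner_add_left, real_inner_smul_left, real_inner_self_eq_norm_sq, hv, huv, hwv]
      using h'
  rcases sin_eq_zero_iff_cos_eq.mp hsin with hcos | hcos <;> simp [hsin, hcos]

theorem exists_norm_eq_one_inner_eq_zero [FiniteDimensional ℝ E] (hE : 2 < finrank ℝ E)
    (u v : E) : ∃ w : E, ‖w‖ = 1 ∧ ⟪u, w⟫ = 0 ∧ ⟪v, w⟫ = 0 := by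
  set K := Submodule.span ℝ (Set.range ![u, v])
  have hK : finrank ℝ K ≤ 2 := (finrank_range_le_card _).trans_eq (Fintype.card_fin 2)
  have hKperp : Kᗮ ≠ ⊥ := by
    intro h
    have := K.finrank_add_finrank_orthogonal
    rw [h, finrank_bot] at this
    omega
  obtain ⟨w, hwK, hw⟩ := Submodule.exists_mem_ne_zero_of_ne_bot hKperp
  have hmem : ∀ i, ⟪![u, v] i, ‖w‖⁻¹ • w⟫ = 0 := fun i =>
    K.inner_right_of_mem_orthogonal (Submodule.subset_span ⟨i, rfl⟩) (Kᗮ.smul_mem _ hwK)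
  exact ⟨‖w‖⁻¹ • w, norm_smul_inv_norm hw, hmem 0, hmem 1⟩

end GreatCircle

def sphGeodesic (u v : E3) (α β c : ℝ) : Set (S2 × ℝ) :=
  {q | ∃ t, (q.1 : E3) = cos (α * t) • u + sin (α * t) • v ∧ q.2 = β * t + c}

theorem isSphGeodesic_iff {G : Set (S2 × ℝ)} :
    IsSphGeodesic G ↔ ∃ (u v : S2) (α β c : ℝ), ⟪(u : E3), (v : E3)⟫ = 0 ∧
      (α, β) ≠ ((0 : ℝ), (0 : ℝ)) ∧ G = sphGeodesic u v α β c :=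
  Iff.rfl

noncomputable def sphGeodesicPoint {u v : S2} (huv : ⟪(u : E3), (v : E3)⟫ = 0) (α β c t : ℝ) :
    S2 × ℝ :=
  (⟨cos (α * t) • (u : E3) + sin (α * t) • (v : E3), mem_sphere_zero_iff_norm.mpr <|
    norm_cos_smul_add_sin_smul (norm_eq_of_mem_sphere u) (norm_eq_of_mem_sphere v) huv _⟩,
    β * t + c)

theorem sphGeodesicPoint_mem {u v : S2} (huv : ⟪(u : E3), (v : E3)⟫ = 0) (α β c t : ℝ) :
    sphGeodesicPoint huv α β c t ∈ sphGeodesic u v α β c :=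
  ⟨t, rfl, rfl⟩

theorem eq_zero_of_sphGeodesic_subset {u v : S2} (huv : ⟪(u : E3), (v : E3)⟫ = 0)
    {α β c r : ℝ} (h : sphGeodesic u v α β c ⊆ {q | q.2 = r}) : β = 0 := by
  have h₀ : β * 0 + c = r := h (sphGeodesicPoint_mem huv α β c 0)
  have h₁ : β * 1 + c = r := h (sphGeodesicPoint_mem huv α β c 1)
  linarith

theorem sphGeodesic_inter_sphGeodesic_eq_pair {u v w : S2} (huv : ⟪(u : E3), (v : E3)⟫ = 0)
    (hwv : ⟪(w : E3), (v : E3)⟫ = 0) {α : ℝ} (hα : α ≠ 0) (c : ℝ) :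
    sphGeodesic u v α 0 c ∩ sphGeodesic u w 1 0 c = {(u, c), (-u, c)} := by
  ext ⟨p, h⟩
  simp only [sphGeodesic, Set.mem_inter_iff, Set.mem_ofPred_eq, Set.mem_insert_iff,
    Set.mem_singleton_iff, Prod.mk.injEq, zero_mul, zero_add, one_mul]
  constructor
  · rintro ⟨⟨s, hs, rfl⟩, t, ht, -⟩
    rcases cos_smul_add_sin_smul_eq_or_eq_neg (norm_eq_of_mem_sphere v) huv hwv
      (hs.symm.trans ht) with h | h
    · exact .inl ⟨Subtype.ext (hs.trans h), rfl⟩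
    · exact .inr ⟨Subtype.ext (hs.trans h), rfl⟩
  · rintro (⟨rfl, rfl⟩ | ⟨rfl, rfl⟩)
    · exact ⟨⟨0, by simp, rfl⟩, 0, by simp, rfl⟩
    · exact ⟨⟨π / α, by simp [mul_div_cancel₀ _ hα], rfl⟩, π, by simp, rfl⟩

theorem exists_sphGeodesic_inter_eq_pair {u v : S2} (huv : ⟪(u : E3), (v : E3)⟫ = 0)
    {α : ℝ} (hα : α ≠ 0) (c : ℝ) :
    ∃ G', IsSphGeodesic G' ∧ G' ≠ sphGeodesic u v α 0 c ∧
      ∃ a b : S2 × ℝ, a ≠ b ∧ sphGeodesic u v α 0 c ∩ G' = {a, b} := by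
  obtain ⟨w, hw, huw, hvw⟩ :=
    exists_norm_eq_one_inner_eq_zero (by simp : 2 < finrank ℝ E3) (u : E3) v
  set w' : S2 := ⟨w, mem_sphere_zero_iff_norm.mpr hw⟩
  have hw'_mem : (w', c) ∈ sphGeodesic u w' 1 0 c := ⟨π / 2, by simp [w'], by simp⟩
  have hw'_not_mem : (w', c) ∉ sphGeodesic u v α 0 c := by
    rintro ⟨s, hs, -⟩
    have := congrArg (⟪·, w⟫) hs
    simp [w', inner_add_left, real_inner_smul_left, hw, huw, hvw] at this
  refine ⟨sphGeodesic u w' 1 0 c, ⟨u, w', 1, 0, c, huw, by simp, rfl⟩,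
    ne_of_mem_of_not_mem' hw'_mem hw'_not_mem, (u, c), (-u, c),
    by simpa using ne_neg_of_mem_sphere ℝ one_ne_zero u, ?_⟩
  exact sphGeodesic_inter_sphGeodesic_eq_pair huv (by rwa [real_inner_comm]) hα c

theorem exists_mem_sphGeodesic_inter_ne_of_ne {u v u' v' : S2}
    (huv : ⟪(u : E3), (v : E3)⟫ = 0) (huv' : ⟪(u' : E3), (v' : E3)⟫ = 0)
    {α β c α' β' c' : ℝ} (hβ : β ≠ 0) {a b : S2 × ℝ} (hab : a ≠ b)
    (ha : a ∈ sphGeodesic u v α β c ∩ sphGeodesic u' v' α' β' c')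
    (hb : b ∈ sphGeodesic u v α β c ∩ sphGeodesic u' v' α' β' c') :
    ∃ x ∈ sphGeodesic u v α β c ∩ sphGeodesic u' v' α' β' c', x ≠ a ∧ x ≠ b := by
  obtain ⟨⟨s₁, ha₁, ha₂⟩, t₁, ha₁', ha₂'⟩ := ha
  obtain ⟨⟨s₂, hb₁, hb₂⟩, t₂, hb₁', hb₂'⟩ := hb
  have hs : s₁ ≠ s₂ := by
    rintro rfl
    exact hab (Prod.ext (Subtype.ext (ha₁.trans hb₁.symm)) (ha₂.trans hb₂.symm))
  have hsphere := cos_smul_add_sin_smul_two_mul_sub_eq (norm_eq_of_mem_sphere u)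
    (norm_eq_of_mem_sphere v) huv (norm_eq_of_mem_sphere u') (norm_eq_of_mem_sphere v') huv'
    (ha₁.symm.trans ha₁') (hb₁.symm.trans hb₁')
  refine ⟨sphGeodesicPoint huv α β c (2 * s₁ - s₂),
    ⟨sphGeodesicPoint_mem huv α β c _, 2 * t₁ - t₂, ?_, ?_⟩, ?_, ?_⟩
  · simpa only [sphGeodesicPoint, mul_sub, mul_left_comm _ (2 : ℝ)] using hsphere
  · simp only [sphGeodesicPoint]
    linear_combination 2 * (ha₂.symm.trans ha₂') - hb₂.symm.trans hb₂'
  · intro h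
    have h₂ : β * (2 * s₁ - s₂) + c = β * s₁ + c := ha₂ ▸ congrArg Prod.snd h
    exact hs (by linarith [mul_left_cancel₀ hβ (add_right_cancel h₂)])
  · intro h
    have h₂ : β * (2 * s₁ - s₂) + c = β * s₂ + c := hb₂ ▸ congrArg Prod.snd h
    exact hs (by linarith [mul_left_cancel₀ hβ (add_right_cancel h₂)])

/-- A geodesic of `S² × ℝ` is horizontal if and only if there is another geodesic meeting it
in exactly two points. -/
theorem sphere_times_real_horizontal_iff_two_point_intersection
    (G : Set (S2 × ℝ)) (hG : IsSphGeodesic G) :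
    IsHorizontalSphGeodesic G ↔
      ∃ G' : Set (S2 × ℝ), IsSphGeodesic G' ∧ G' ≠ G ∧
        ∃ a b : S2 × ℝ, a ≠ b ∧ G ∩ G' = {a, b} := by
  obtain ⟨u, v, α, β, c, huv, hαβ, rfl⟩ := isSphGeodesic_iff.mp hG
  constructor
  · rintro ⟨-, r, hr⟩
    obtain rfl := eq_zero_of_sphGeodesic_subset huv hr
    exact exists_sphGeodesic_inter_eq_pair huv (by rintro rfl; exact hαβ rfl) c
  · rintro ⟨G', hG', -, a, b, hab, hinter⟩
    obtain ⟨u', v', α', β', c', huv', -, rfl⟩ := isSphGeodesic_iff.mp hG'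
    refine ⟨hG, c, ?_⟩
    obtain rfl : β = 0 := by
      by_contra hβ
      obtain ⟨x, hx, hxa, hxb⟩ := exists_mem_sphGeodesic_inter_ne_of_ne huv huv' hβ hab
        (hinter ▸ Set.mem_insert a {b}) (hinter ▸ Set.mem_insert_of_mem a rfl)
      rw [hinter] at hx
      rcases hx with rfl | rfl <;> contradiction
    rintro q ⟨t, -, hq⟩
    simpa using hq
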